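/- arXiv:2102.11926 — 2 statements merged into one kernel-verified Lean document; each statement's English description precedes it below -/
import Mathlib

section
/- Normalization equivalence: Suppose alpha4 minimizes the ratio sqrt(alpha^T Q alpha)/(1^T alpha / 2) over the SVM feasible set A_SVM \ {0} (nonzero vectors with entries in [0,1] and equal treated/control weight sums), and alpha5 minimizes sqrt(alpha^T Q alpha) over the simplex set A_simplex (entries in [0,1] with treated and control weights each summing to 1). Then the optimal ratio value equals sqrt(alpha5^T Q alpha5), and the normalized vector alpha4 / (1^T alpha4 / 2) is a minimizer over A_simplex. -/
open Finset

/-- Equivalence between the fractional program over `A_SVM \ {0}` and MMD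
minimization over the simplex set. -/
theorem svm_fractional_simplex_equivalence (N : ℕ)
    (Q : Matrix (Fin N) (Fin N) ℝ) (hQ : Q.PosSemidef)
    (T C : Finset (Fin N)) (hdisj : Disjoint T C) (hunion : T ∪ C = univ)
    (ASVM Asimplex : Set (Fin N → ℝ))
    (hASVM : ASVM = {α | (∀ i, 0 ≤ α i ∧ α i ≤ 1) ∧ ∑ i ∈ T, α i = ∑ i ∈ C, α i})
    (hAsimplex : Asimplex =
      {α | (∀ i, 0 ≤ α i ∧ α i ≤ 1) ∧ ∑ i ∈ T, α i = 1 ∧ ∑ i ∈ C, α i = 1})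
    (q : (Fin N → ℝ) → ℝ) (hq : ∀ α, q α = ∑ i, ∑ j, α i * Q i j * α j)
    (α4 : Fin N → ℝ) (hα4 : α4 ∈ ASVM) (hα4ne : α4 ≠ 0)
    (hα4min : ∀ β ∈ ASVM, β ≠ 0 →
      Real.sqrt (q α4) / ((∑ i, α4 i) / 2) ≤ Real.sqrt (q β) / ((∑ i, β i) / 2))
    (α5 : Fin N → ℝ) (hα5 : α5 ∈ Asimplex)
    (hα5min : ∀ β ∈ Asimplex, Real.sqrt (q α5) ≤ Real.sqrt (q β)) :
    Real.sqrt (q α4) / ((∑ i, α4 i) / 2) = Real.sqrt (q α5) ∧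
      (fun i => α4 i / ((∑ j, α4 j) / 2)) ∈ Asimplex ∧
      ∀ β ∈ Asimplex,
        Real.sqrt (q (fun i => α4 i / ((∑ j, α4 j) / 2))) ≤ Real.sqrt (q β) := by
  subst hASVM hAsimplex
  obtain ⟨hbound, hsum⟩ := hα4
  set s : ℝ := ∑ i ∈ T, α4 i with hs
  have hsC : ∑ i ∈ C, α4 i = s := hsum.symm
  have huniv : ∑ i, α4 i = 2 * s := by
    rw [← hunion, Finset.sum_union hdisj, hsC]; ring
  have hhalf : (∑ i, α4 i) / 2 = s := by rw [huniv]; ring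
  -- s > 0
  have hspos : 0 < s := by
    obtain ⟨i, hi⟩ := Function.ne_iff.mp hα4ne
    have hipos : 0 < α4 i := lt_of_le_of_ne (hbound i).1 (Ne.symm hi)
    have hiu : i ∈ T ∪ C := by rw [hunion]; exact Finset.mem_univ i
    rcases Finset.mem_union.mp hiu with h | h
    · exact lt_of_lt_of_le hipos
        (Finset.single_le_sum (fun j _ => (hbound j).1) h)
    · calc (0:ℝ) < α4 i := hipos
        _ ≤ ∑ i ∈ C, α4 i := Finset.single_le_sum (fun j _ => (hbound j).1) h
        _ = s := hsC
  -- nonnegativity of q on arbitrary vectors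
  have hqnn : ∀ α : Fin N → ℝ, 0 ≤ q α := by
    intro α
    have h := hQ.dotProduct_mulVec_nonneg α
    rw [hq]
    simpa [dotProduct, Matrix.mulVec, Finset.mul_sum, mul_assoc] using h
  -- scaling of q
  have hqscale : q (fun i => α4 i / ((∑ j, α4 j) / 2)) = q α4 / s ^ 2 := by
    simp only [hq, hhalf, Finset.sum_div]
    refine Finset.sum_congr rfl fun i _ => ?_
    refine Finset.sum_congr rfl fun j _ => ?_
    field_simp
  have hsqrtscale :
      Real.sqrt (q (fun i => α4 i / ((∑ j, α4 j) / 2)))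
        = Real.sqrt (q α4) / s := by
    rw [hqscale, Real.sqrt_div (hqnn α4), Real.sqrt_sq hspos.le]
  -- the normalized vector is in the simplex
  have hmem : (fun i => α4 i / ((∑ j, α4 j) / 2)) ∈
      {α : Fin N → ℝ | (∀ i, 0 ≤ α i ∧ α i ≤ 1) ∧
        ∑ i ∈ T, α i = 1 ∧ ∑ i ∈ C, α i = 1} := by
    refine ⟨fun i => ?_, ?_, ?_⟩
    · rw [hhalf]
      constructor
      · exact div_nonneg (hbound i).1 hspos.le
      · rw [div_le_one hspos]
        have hiu : i ∈ T ∪ C := by rw [hunion]; exact Finset.mem_univ i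
        rcases Finset.mem_union.mp hiu with h | h
        · exact Finset.single_le_sum (fun j _ => (hbound j).1) h
        · calc α4 i ≤ ∑ i ∈ C, α4 i :=
              Finset.single_le_sum (fun j _ => (hbound j).1) h
            _ = s := hsC
    · simp only [hhalf]
      rw [← Finset.sum_div, ← hs, div_self hspos.ne']
    · simp only [hhalf]
      rw [← Finset.sum_div, hsC, div_self hspos.ne']
  -- any simplex element is an admissible nonzero SVM element with sum 2
  have hsimp2 : ∀ β : Fin N → ℝ,
      β ∈ {α : Fin N → ℝ | (∀ i, 0 ≤ α i ∧ α i ≤ 1) ∧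
        ∑ i ∈ T, α i = 1 ∧ ∑ i ∈ C, α i = 1} →
      (β ∈ {α : Fin N → ℝ | (∀ i, 0 ≤ α i ∧ α i ≤ 1) ∧
        ∑ i ∈ T, α i = ∑ i ∈ C, α i} ∧ β ≠ 0 ∧ (∑ i, β i) / 2 = 1) := by
    intro β hβ
    obtain ⟨hb, hT1, hC1⟩ := hβ
    refine ⟨⟨hb, by rw [hT1, hC1]⟩, ?_, ?_⟩
    · intro h0
      rw [h0] at hT1
      simp at hT1
    · rw [← hunion, Finset.sum_union hdisj, hT1, hC1]; norm_num
  -- main inequalities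
  have hle1 : Real.sqrt (q α4) / ((∑ i, α4 i) / 2) ≤ Real.sqrt (q α5) := by
    obtain ⟨hmem5, hne5, hsum5⟩ := hsimp2 α5 hα5
    have := hα4min α5 hmem5 hne5
    rwa [hsum5, div_one] at this
  have hle2 : Real.sqrt (q α5) ≤ Real.sqrt (q α4) / ((∑ i, α4 i) / 2) := by
    have := hα5min _ hmem
    rw [hsqrtscale] at this
    rw [hhalf]
    exact this
  refine ⟨le_antisymm hle1 hle2, hmem, fun β hβ => ?_⟩
  obtain ⟨hmemβ, hneβ, hsumβ⟩ := hsimp2 β hβ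
  have := hα4min β hmemβ hneβ
  rw [hsumβ, div_one] at this
  rw [hsqrtscale, ← hhalf]
  exact this
end

section
/- If q* > 0 is the optimal value of the ratio sqrt(alpha^T Q alpha)/(1^T alpha / 2) over A_SVM \ {0}, then for any nu > q*/2, every minimizer of alpha -> sqrt(alpha^T Q alpha) - nu * 1^T alpha over A_SVM is nonzero, provided A_SVM contains some nonzero element. -/
open Finset

/-- For `ν > q*/2`, every minimizer of the penalized objective over `A_SVM`
is nonzero. -/
theorem penalized_minimizer_nonzero (N : ℕ)
    (Q : Matrix (Fin N) (Fin N) ℝ) (hQ : Q.PosSemidef)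
    (T C : Finset (Fin N)) (hdisj : Disjoint T C) (hunion : T ∪ C = univ)
    (ASVM : Set (Fin N → ℝ))
    (hASVM : ASVM = {α | (∀ i, 0 ≤ α i ∧ α i ≤ 1) ∧ ∑ i ∈ T, α i = ∑ i ∈ C, α i})
    (hne : ∃ α ∈ ASVM, α ≠ 0)
    (q : (Fin N → ℝ) → ℝ) (hq : ∀ α, q α = ∑ i, ∑ j, α i * Q i j * α j)
    (qstar : ℝ) (hqpos : 0 < qstar)
    (hqstar : IsLeast
      {r : ℝ | ∃ α ∈ ASVM, α ≠ 0 ∧ r = Real.sqrt (q α) / ((∑ i, α i) / 2)} qstar)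
    (ν : ℝ) (hν : qstar / 2 < ν)
    (αstar : Fin N → ℝ) (hαstar : αstar ∈ ASVM)
    (hmin : ∀ β ∈ ASVM,
      Real.sqrt (q αstar) - ν * ∑ i, αstar i ≤ Real.sqrt (q β) - ν * ∑ i, β i) :
    αstar ≠ 0 := by
  intro h0
  obtain ⟨α, hαA, hαne, hr⟩ := hqstar.1
  have hmem : (∀ i, 0 ≤ α i ∧ α i ≤ 1) ∧ ∑ i ∈ T, α i = ∑ i ∈ C, α i := by
    rw [hASVM] at hαA; exact hαA
  have hsum : 0 < ∑ i, α i := by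
    have hex : ∃ i, α i ≠ 0 := by
      by_contra h; push_neg at h; exact hαne (funext h)
    obtain ⟨i, hi⟩ := hex
    exact Finset.sum_pos' (fun j _ => (hmem.1 j).1)
      ⟨i, Finset.mem_univ i, lt_of_le_of_ne (hmem.1 i).1 (Ne.symm hi)⟩
  have hsq : Real.sqrt (q α) = qstar * ((∑ i, α i) / 2) := by
    rw [hr]; field_simp
  have h0obj : Real.sqrt (q αstar) - ν * ∑ i, αstar i = 0 := by
    subst h0; simp [hq]
  have hle := hmin α hαA
  rw [h0obj, hsq] at hle
  nlinarith
end
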